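/- Let g be a symmetric bilinear form on ℝⁿ of Lorentzian signature (−,+,…,+) and let V be a nonzero past-directed causal vector (i.e., g(V,V) ≤ 0, V ≠ 0, and g(V, T) > 0 for a fixed future-directed timelike reference vector T). If g(V, W) ≥ sqrt(−g(W,W)) for every future-directed causal vector W, then V is not lightlike, i.e., g(V,V) < 0. -/

import Mathlib

open Finset in
/-- Standard Minkowski form of signature (−,+,…,+) on ℝ^{n+1}. -/
def mink (n : ℕ) (v w : Fin (n+1) → ℝ) : ℝ := (∑ i, v i * w i) - 2 * v 0 * w 0

lemma mink_comm (n : ℕ) (v w : Fin (n+1) → ℝ) : mink n v w = mink n w v := by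
  simp only [mink]
  rw [Finset.sum_congr rfl (fun i _ => mul_comm (v i) (w i))]
  ring

lemma mink_expand (n : ℕ) (V T : Fin (n+1) → ℝ) (s : ℝ) :
    mink n (fun i => -V i + s * T i) (fun i => -V i + s * T i)
      = mink n V V - 2 * s * mink n V T + s^2 * mink n T T := by
  simp only [mink, ← Finset.sum_add_distrib, ← Finset.mul_sum, ← Finset.sum_sub_distrib]
  rw [Finset.sum_congr rfl (fun i _ => by ring :
    ∀ i ∈ Finset.univ, (-V i + s * T i) * (-V i + s * T i)
      = V i * V i - 2 * s * (V i * T i) + s^2 * (T i * T i))]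
  simp [Finset.sum_add_distrib, Finset.sum_sub_distrib, ← Finset.mul_sum]
  ring

lemma mink_right (n : ℕ) (U V T : Fin (n+1) → ℝ) (s : ℝ) :
    mink n U (fun i => -V i + s * T i) = -mink n U V + s * mink n U T := by
  simp only [mink]
  rw [Finset.sum_congr rfl (fun i _ => by ring :
    ∀ i ∈ Finset.univ, U i * (-V i + s * T i) = -(U i * V i) + s * (U i * T i))]
  simp [Finset.sum_add_distrib, ← Finset.mul_sum]
  ring

/-- Lemma 2.5 (Cui–Jin): if V is a nonzero past-directed causal vector with
g(V,W) ≥ √(−g(W,W)) for every future-directed causal W, then V is not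
lightlike, i.e., V is timelike. Time orientation is given by a fixed
future-directed timelike vector T with g(T,T) = −1. -/
theorem stmt2 (n : ℕ) (T V : Fin (n+1) → ℝ)
    (hT : mink n T T = -1)
    (hVcausal : mink n V V ≤ 0) (hVne : V ≠ 0) (hVpast : mink n T V > 0)
    (hineq : ∀ W : Fin (n+1) → ℝ,
      mink n W W ≤ 0 → W ≠ 0 → mink n T W < 0 →
      mink n V W ≥ Real.sqrt (-(mink n W W))) :
    mink n V V < 0 := by
  by_contra hlt
  have h0 : mink n V V = 0 := le_antisymm hVcausal (not_lt.mp hlt)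
  set p := mink n T V with hp
  have hVT : mink n V T = p := mink_comm n V T
  set s : ℝ := p / (p^2 + 1) with hs
  have hps : 0 < p^2 + 1 := by positivity
  have hs0 : 0 < s := div_pos hVpast hps
  set W : Fin (n+1) → ℝ := fun i => -V i + s * T i with hW
  have hWW : mink n W W = -(2 * s * p + s^2) := by
    rw [hW, mink_expand, h0, hVT, hT]; ring
  have hWWneg : mink n W W < 0 := by
    rw [hWW]; nlinarith
  have hTW : mink n T W = -p - s := by
    rw [hW, mink_right, hp, hT]; ring
  have hVW : mink n V W = s * p := by
    rw [hW, mink_right, h0, hVT]; ring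
  have hWne : W ≠ 0 := by
    intro h
    have : mink n T W = 0 := by simp [h, mink]
    rw [hTW] at this; nlinarith
  have key := hineq W hWWneg.le hWne (by rw [hTW]; nlinarith)
  rw [hVW, hWW, neg_neg] at key
  have hsq : (Real.sqrt (2 * s * p + s^2))^2 = 2 * s * p + s^2 :=
    Real.sq_sqrt (by nlinarith)
  have key2 : (s * p)^2 ≥ 2 * s * p + s^2 := by
    nlinarith [Real.sqrt_nonneg (2 * s * p + s^2)]
  -- but s = p/(p^2+1) gives s*p^2 < 2*p + s, contradiction
  have : s * (p^2 + 1) = p := by rw [hs, div_mul_cancel₀ _ hps.ne']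
  nlinarith
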